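/- For the figure-8 graph, the stationary vector p(x) = (2e^x/(6e^x+e^{2x}−3), (2e^x+e^{2x}−3)/(2(6e^x+e^{2x}−3)), 2e^x/(6e^x+e^{2x}−3), (2e^x+e^{2x}−3)/(2(6e^x+e^{2x}−3))) satisfies P p = p and p_1+p_2+p_3+p_4 = 1, where P is the stochastic matrix P(i,j) = A(i,j) v(i) e^{−l(i)} / v(j) built from the figure-8 data, for all x > 0. -/

import Mathlib

open Real

/-!
Write `q = e^{-x}`. The unnormalised vector `v = (2q, (1-q)(1+3q)/2, 2q, (1-q)(1+3q)/2)` is fixed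
by `P` as soon as `1 + 3q ≠ 0`, by a polynomial identity in `q`, and its entries sum to
`1 + 6q - 3q²`, which is positive for `0 < q < 1`. Dividing `v` by this sum and multiplying
numerator and denominator by `e^{2x}` gives the vector `p`.
-/

theorem sum_inv_sum_smul {ι K : Type*} [Fintype ι] [Field K] {v : ι → K} (hv : ∑ i, v i ≠ 0) :
    ∑ i, ((∑ j, v j)⁻¹ • v) i = 1 := by
  simp only [Pi.smul_apply, smul_eq_mul, ← Finset.mul_sum, inv_mul_cancel₀ hv]

namespace Figure8

variable {K : Type*} [Field K]

def transitionMatrix (q : K) : Matrix (Fin 4) (Fin 4) K :=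
  !![q, 2 * q / (1 + 3 * q), 0, 2 * q / (1 + 3 * q);
     (1 - q) / 2, (1 - q) / (1 + 3 * q), (1 - q) / 2, 0;
     0, 2 * q / (1 + 3 * q), q, 2 * q / (1 + 3 * q);
     (1 - q) / 2, 0, (1 - q) / 2, (1 - q) / (1 + 3 * q)]

def fixedVector (q : K) : Fin 4 → K :=
  ![2 * q, (1 - q) * (1 + 3 * q) / 2, 2 * q, (1 - q) * (1 + 3 * q) / 2]

theorem transitionMatrix_mulVec_fixedVector [NeZero (2 : K)] {q : K} (h : 1 + 3 * q ≠ 0) :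
    (transitionMatrix q).mulVec (fixedVector q) = fixedVector q := by
  -- `field_simp` looks for this side condition in its own normal form
  have h' : 1 + q * 3 ≠ 0 := by rwa [mul_comm]
  ext i
  fin_cases i <;>
    simp only [transitionMatrix, fixedVector, Matrix.mulVec, dotProduct, Fin.sum_univ_four,
      Matrix.of_apply, Fin.zero_eta, Fin.mk_one, Fin.reduceFinMk, Matrix.cons_val] <;>
    field_simp <;> ring

theorem sum_fixedVector [NeZero (2 : K)] (q : K) :
    ∑ i, fixedVector q i = 1 + 6 * q - 3 * q ^ 2 := by
  simp only [fixedVector, Fin.sum_univ_four, Matrix.cons_val]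
  field_simp
  ring

theorem inv_sum_smul_fixedVector [NeZero (2 : K)] {q : K} (hq : q ≠ 0) :
    (∑ i, fixedVector q i)⁻¹ • fixedVector q =
      ![2 * q⁻¹ / (6 * q⁻¹ + q⁻¹ ^ 2 - 3),
        (2 * q⁻¹ + q⁻¹ ^ 2 - 3) / (2 * (6 * q⁻¹ + q⁻¹ ^ 2 - 3)),
        2 * q⁻¹ / (6 * q⁻¹ + q⁻¹ ^ 2 - 3),
        (2 * q⁻¹ + q⁻¹ ^ 2 - 3) / (2 * (6 * q⁻¹ + q⁻¹ ^ 2 - 3))] := by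
  rw [sum_fixedVector]
  ext i
  fin_cases i <;>
    simp only [fixedVector, Pi.smul_apply, smul_eq_mul, Fin.zero_eta, Fin.mk_one,
      Fin.reduceFinMk, Matrix.cons_val] <;>
    field_simp <;> ring

end Figure8

theorem figure8_stationary_vector (x : ℝ) (hx : 0 < x)
    (P : Matrix (Fin 4) (Fin 4) ℝ)
    (hP : P = !![exp (-x), 2 * exp (-x) / (1 + 3 * exp (-x)), 0, 2 * exp (-x) / (1 + 3 * exp (-x));
                 (1 - exp (-x)) / 2, (1 - exp (-x)) / (1 + 3 * exp (-x)), (1 - exp (-x)) / 2, 0;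
                 0, 2 * exp (-x) / (1 + 3 * exp (-x)), exp (-x), 2 * exp (-x) / (1 + 3 * exp (-x));
                 (1 - exp (-x)) / 2, 0, (1 - exp (-x)) / 2, (1 - exp (-x)) / (1 + 3 * exp (-x))])
    (p : Fin 4 → ℝ)
    (hp : p = ![2 * exp x / (6 * exp x + exp (2 * x) - 3),
                (2 * exp x + exp (2 * x) - 3) / (2 * (6 * exp x + exp (2 * x) - 3)),
                2 * exp x / (6 * exp x + exp (2 * x) - 3),
                (2 * exp x + exp (2 * x) - 3) / (2 * (6 * exp x + exp (2 * x) - 3))]) :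
    Matrix.mulVec P p = p ∧ p 0 + p 1 + p 2 + p 3 = 1 := by
  have hexp : exp x = (exp (-x))⁻¹ := by rw [exp_neg, inv_inv]
  set q := exp (-x)
  have hq₀ : 0 < q := exp_pos _
  have hq₁ : q < 1 := exp_lt_one_iff.mpr (neg_lt_zero.mpr hx)
  have hsum : 1 + 6 * q - 3 * q ^ 2 ≠ 0 := by nlinarith
  have hexp₂ : exp (2 * x) = exp x ^ 2 := by rw [← exp_nat_mul]; norm_num
  rw [hexp₂, hexp, ← Figure8.inv_sum_smul_fixedVector hq₀.ne'] at hp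
  replace hP : P = Figure8.transitionMatrix q := hP
  subst hP hp
  constructor
  · rw [Matrix.mulVec_smul, Figure8.transitionMatrix_mulVec_fixedVector (by positivity)]
  · rw [← Fin.sum_univ_four, sum_inv_sum_smul (by rwa [Figure8.sum_fixedVector])]
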